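/- Let F be a finite field with q = |F| elements and K a finite field extension of F. Let ζ ∈ K with ζ ≠ 0, and let P ∈ K[X] be a linearized polynomial with P(ζ) = 0. Then X^q − ζ^{q−1}·X right-divides P; that is, there exists a linearized polynomial Q ∈ K[X] such that P = Q ∘ (X^q − ζ^{q−1}·X). -/

import Mathlib

open Polynomial

/-- A polynomial over `K` is linearized (a `q`-polynomial) if every exponent in
its support is a power of `q`. -/
def IsLinearized (q : ℕ) {K : Type*} [Semiring K] (p : K[X]) : Prop :=
  ∀ n ∈ p.support, ∃ i : ℕ, n = q ^ i

/-!
Write `B = X^q - c X` with `c = ζ^(q-1)`. Since `q` is a power of the characteristic, raising to the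
power `q^i` is additive on `K[X]`, so `X^(q^i) ∘ B = X^(q^(i+1)) - c^(q^i) X^(q^i)`. By induction
on `i` every monomial `a X^(q^i)`, and hence every linearized `P`, is of the form
`Q ∘ B + a X` with `Q` linearized. Evaluating at `ζ`, where `B` vanishes and
`Q(0) = 0`, gives `a ζ = 0`, hence `a = 0`.
-/

namespace IsLinearized

variable {q : ℕ} {R : Type*}

section Semiring

variable [Semiring R]

lemma zero : IsLinearized q (0 : R[X]) := by
  simp [IsLinearized]

lemma C_mul_X_pow (a : R) (i : ℕ) : IsLinearized q (C a * X ^ q ^ i) := fun _ hn =>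
  ⟨i, Finset.mem_singleton.1 (support_C_mul_X_pow_subset _ a hn)⟩

lemma add {P Q : R[X]} (hP : IsLinearized q P) (hQ : IsLinearized q Q) :
    IsLinearized q (P + Q) := fun n hn => by
  rcases Finset.mem_union.1 (support_add hn) with h | h
  exacts [hP n h, hQ n h]

lemma eval_zero (hq : q ≠ 0) {P : R[X]} (hP : IsLinearized q P) : P.eval 0 = 0 := by
  rw [← coeff_zero_eq_eval_zero]
  by_contra h
  obtain ⟨i, hi⟩ := hP 0 (mem_support_iff.2 h)
  exact pow_ne_zero i hq hi.symm

@[elab_as_elim]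
lemma induction_on {motive : R[X] → Prop} {P : R[X]} (hP : IsLinearized q P) (zero : motive 0)
    (add : ∀ P Q, motive P → motive Q → motive (P + Q))
    (C_mul_X_pow : ∀ a i, motive (C a * X ^ q ^ i)) :
    motive P := by
  rw [as_sum_support P]
  refine Finset.sum_induction _ motive add zero fun n hn => ?_
  obtain ⟨i, rfl⟩ := hP n hn
  rw [← C_mul_X_pow_eq_monomial]
  exact C_mul_X_pow _ i

end Semiring

end IsLinearized

section CommRing

variable {R : Type*} [CommRing R] {p m q : ℕ} [ExpChar R p]

lemma X_pow_pow_comp_X_pow_sub_C_mul_X (hq : q = p ^ m) (c : R) (i : ℕ) :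
    (X ^ q ^ i : R[X]).comp (X ^ q - C c * X) = X ^ q ^ (i + 1) - C (c ^ q ^ i) * X ^ q ^ i := by
  have hqi : q ^ i = p ^ (m * i) := by rw [hq, pow_mul]
  rw [X_pow_comp, hqi, sub_pow_expChar_pow, ← pow_mul, mul_pow, ← C_pow, ← hqi, ← pow_succ']

theorem IsLinearized.exists_eq_comp_add_C_mul_X (hq : q = p ^ m) (c : R) {P : R[X]}
    (hP : IsLinearized q P) :
    ∃ Q : R[X], IsLinearized q Q ∧ ∃ a : R, P = Q.comp (X ^ q - C c * X) + C a * X := by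
  refine hP.induction_on ?zero ?add ?C_mul_X_pow
  case zero => exact ⟨0, .zero, 0, by simp⟩
  case add =>
    rintro P₁ P₂ h₁ h₂
    obtain ⟨Q₁, hQ₁, a₁, rfl⟩ := h₁
    obtain ⟨Q₂, hQ₂, a₂, rfl⟩ := h₂
    exact ⟨Q₁ + Q₂, hQ₁.add hQ₂, a₁ + a₂, by simp only [add_comp, C_add]; ring⟩
  case C_mul_X_pow =>
    intro a i
    induction i generalizing a with
    | zero => exact ⟨0, .zero, a, by simp⟩
    | succ i ih =>
      obtain ⟨Q, hQ, b, hb⟩ := ih (a * c ^ q ^ i)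
      refine ⟨C a * X ^ q ^ i + Q, (IsLinearized.C_mul_X_pow a i).add hQ, b, ?_⟩
      rw [add_comp, mul_comp, C_comp, X_pow_pow_comp_X_pow_sub_C_mul_X hq, add_assoc, ← hb,
        C_mul]
      ring

end CommRing

theorem annihilator_right_divides_of_root (F K : Type*) [Field F] [Fintype F]
    [Field K] [Algebra F K]
    (q : ℕ) (hq : q = Fintype.card F)
    (ζ : K) (hζ : ζ ≠ 0) (P : K[X]) (hP : IsLinearized q P)
    (hroot : P.eval ζ = 0) :
    ∃ Q : K[X], IsLinearized q Q ∧ P = Q.comp (X ^ q - C (ζ ^ (q - 1)) * X) := by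
  obtain ⟨p, _, m, hp, hcard⟩ := FiniteField.card' F
  have : ExpChar F p := .prime hp
  have : ExpChar K p := ExpChar.of_injective_algebraMap' F p
  have hq₀ : q ≠ 0 := hq ▸ Fintype.card_ne_zero
  obtain ⟨Q, hQ, a, rfl⟩ := hP.exists_eq_comp_add_C_mul_X (hq.trans hcard) (ζ ^ (q - 1))
  have hB : (X ^ q - C (ζ ^ (q - 1)) * X).eval ζ = 0 := by
    rw [eval_sub, eval_mul, eval_C, eval_X, eval_pow, eval_X, ← pow_succ,
      Nat.sub_add_cancel (Nat.one_le_iff_ne_zero.2 hq₀), sub_self]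
  have ha : a = 0 := by
    rw [eval_add, eval_comp, hB, hQ.eval_zero hq₀, zero_add, eval_mul, eval_C, eval_X] at hroot
    exact (mul_eq_zero.1 hroot).resolve_right hζ
  exact ⟨Q, hQ, by rw [ha, C_0, zero_mul, add_zero]⟩
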